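/- If φ and ψ are congruences on optiongraphs C and D respectively, then θ := {((c,d),(c',d')) | c φ c' and d ψ d'} is a congruence on the sum C + D, and (C+D)/θ is isomorphic to C/φ + D/ψ; consequently, for any optiongraphs C and D, (C+D)/⋈ ≅ (C/⋈ + D/⋈)/⋈. -/
import Mathlib


def OptPres {α β : Type} (OptC : α → Set α) (OptD : β → Set β) (f : α → β) : Prop :=
  ∀ p, OptD (f p) = f '' OptC p

def cls {α : Type} (θ : α → α → Prop) (p : α) : Set α := {x | θ p x}

def clsSet {α : Type} (θ : α → α → Prop) (S : Set α) : Set (Set α) := cls θ '' S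

def IsCong {α : Type} (Opt : α → Set α) (θ : α → α → Prop) : Prop :=
  Equivalence θ ∧ ∀ p q, θ p q → clsSet θ (Opt p) = clsSet θ (Opt q)

noncomputable def quotOpt {α : Type} (Opt : α → Set α) (θ : α → α → Prop) :
    Quot θ → Set (Quot θ) := fun c => Quot.mk θ '' Opt c.out

def bowtie {α : Type} (Opt : α → Set α) : α → α → Prop :=
  fun p q => ∃ θ, IsCong Opt θ ∧ θ p q

def subOpt {α : Type} (Opt : α → Set α) (C : Set α) : ↥C → Set ↥C :=
  fun p => {q | (q : α) ∈ Opt (p : α)}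

def IsSubOG {α : Type} (Opt : α → Set α) (C : Set α) : Prop :=
  ∀ p ∈ C, Opt p ⊆ C

def sumOpt {α β : Type} (OptC : α → Set α) (OptD : β → Set β) :
    α × β → Set (α × β) :=
  fun pq => (fun c => (c, pq.2)) '' OptC pq.1 ∪ (fun d => (pq.1, d)) '' OptD pq.2

-- basic lemmas

theorem mk_eq_iff {α : Type} {θ : α → α → Prop} (h : Equivalence θ) {a b : α} :
    Quot.mk θ a = Quot.mk θ b ↔ θ a b := by
  rw [Quot.eq, h.eqvGen_iff]

theorem cls_eq_iff {α : Type} {θ : α → α → Prop} (h : Equivalence θ) {a b : α} :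
    cls θ a = cls θ b ↔ θ a b := by
  constructor
  · intro hab
    have : b ∈ cls θ b := h.refl b
    rw [← hab] at this; exact this
  · intro hab
    ext x
    exact ⟨fun hx => h.trans (h.symm hab) hx, fun hx => h.trans hab hx⟩

def relSet {α : Type} (θ : α → α → Prop) (S T : Set α) : Prop :=
  (∀ x ∈ S, ∃ y ∈ T, θ x y) ∧ (∀ y ∈ T, ∃ x ∈ S, θ x y)

theorem clsSet_eq_iff {α : Type} {θ : α → α → Prop} (h : Equivalence θ) {S T : Set α} :
    clsSet θ S = clsSet θ T ↔ relSet θ S T := by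
  constructor
  · intro hST
    constructor
    · intro x hx
      have : cls θ x ∈ clsSet θ T := by rw [← hST]; exact ⟨x, hx, rfl⟩
      obtain ⟨y, hy, hxy⟩ := this
      exact ⟨y, hy, h.symm ((cls_eq_iff h).1 hxy)⟩
    · intro y hy
      have : cls θ y ∈ clsSet θ S := by rw [hST]; exact ⟨y, hy, rfl⟩
      obtain ⟨x, hx, hxy⟩ := this
      exact ⟨x, hx, (cls_eq_iff h).1 hxy⟩
  · intro ⟨h1, h2⟩
    apply Set.Subset.antisymm
    · rintro _ ⟨x, hx, rfl⟩
      obtain ⟨y, hy, hxy⟩ := h1 x hx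
      exact ⟨y, hy, ((cls_eq_iff h).2 hxy).symm⟩
    · rintro _ ⟨y, hy, rfl⟩
      obtain ⟨x, hx, hxy⟩ := h2 y hy
      exact ⟨x, hx, (cls_eq_iff h).2 hxy⟩

theorem image_mk_eq {α : Type} {θ : α → α → Prop} (h : Equivalence θ) {S T : Set α}
    (hST : relSet θ S T) : Quot.mk θ '' S = Quot.mk θ '' T := by
  apply Set.Subset.antisymm
  · rintro _ ⟨x, hx, rfl⟩
    obtain ⟨y, hy, hxy⟩ := hST.1 x hx
    exact ⟨y, hy, ((mk_eq_iff h).2 hxy).symm⟩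
  · rintro _ ⟨y, hy, rfl⟩
    obtain ⟨x, hx, hxy⟩ := hST.2 y hy
    exact ⟨x, hx, (mk_eq_iff h).2 hxy⟩

theorem rel_out {α : Type} {θ : α → α → Prop} (h : Equivalence θ) (a : α) :
    θ (Quot.mk θ a).out a :=
  (mk_eq_iff h).1 (Quot.out_eq _)

theorem cong_relSet {α : Type} {Opt : α → Set α} {θ : α → α → Prop}
    (hc : IsCong Opt θ) {p q : α} (hpq : θ p q) : relSet θ (Opt p) (Opt q) :=
  (clsSet_eq_iff hc.1).1 (hc.2 p q hpq)

theorem quotOpt_mk {α : Type} {Opt : α → Set α} {θ : α → α → Prop}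
    (hc : IsCong Opt θ) (p : α) :
    quotOpt Opt θ (Quot.mk θ p) = Quot.mk θ '' Opt p :=
  image_mk_eq hc.1 (cong_relSet hc (rel_out hc.1 p))

theorem isCong_eq {α : Type} (Opt : α → Set α) : IsCong Opt Eq :=
  ⟨⟨fun _ => rfl, Eq.symm, Eq.trans⟩, fun p q hpq => by rw [hpq]⟩

theorem congr_mono {α : Type} {Opt : α → Set α} {θ₁ θ : α → α → Prop}
    (h1 : IsCong Opt θ₁) (h : Equivalence θ) (hle : ∀ a b, θ₁ a b → θ a b)
    {p q : α} (hpq : θ₁ p q) : clsSet θ (Opt p) = clsSet θ (Opt q) := by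
  apply (clsSet_eq_iff h).2
  obtain ⟨l, r⟩ := cong_relSet h1 hpq
  exact ⟨fun x hx => (l x hx).imp (fun y ⟨hy, hxy⟩ => ⟨hy, hle _ _ hxy⟩),
         fun y hy => (r y hy).imp (fun x ⟨hx, hxy⟩ => ⟨hx, hle _ _ hxy⟩)⟩

theorem bowtie_isCong {α : Type} (Opt : α → Set α) : IsCong Opt (bowtie Opt) := by
  have hequiv : Equivalence (bowtie Opt) := by
    refine ⟨fun a => ⟨Eq, isCong_eq Opt, rfl⟩, ?_, ?_⟩
    · rintro a b ⟨θ, hθ, hab⟩; exact ⟨θ, hθ, hθ.1.symm hab⟩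
    · rintro a b c ⟨θ₁, hθ₁, hab⟩ ⟨θ₂, hθ₂, hbc⟩
      set ρ := Relation.EqvGen (fun x y => θ₁ x y ∨ θ₂ x y) with hρ
      have hρe : Equivalence ρ := Relation.EqvGen.is_equivalence _
      have hle1 : ∀ a b, θ₁ a b → ρ a b := fun a b h => Relation.EqvGen.rel _ _ (Or.inl h)
      have hle2 : ∀ a b, θ₂ a b → ρ a b := fun a b h => Relation.EqvGen.rel _ _ (Or.inr h)
      have hcong : IsCong Opt ρ := by
        refine ⟨hρe, fun p q hpq => ?_⟩
        induction hpq with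
        | rel x y hxy =>
          rcases hxy with h | h
          · exact congr_mono hθ₁ hρe hle1 h
          · exact congr_mono hθ₂ hρe hle2 h
        | refl x => rfl
        | symm x y _ ih => exact ih.symm
        | trans x y z _ _ ih1 ih2 => exact ih1.trans ih2
      exact ⟨ρ, hcong, hρe.trans (hle1 _ _ hab) (hle2 _ _ hbc)⟩
  refine ⟨hequiv, ?_⟩
  rintro p q ⟨θ, hθ, hpq⟩
  exact congr_mono hθ hequiv (fun a b h => ⟨θ, hθ, h⟩) hpq

theorem bowtie_le {α : Type} {Opt : α → Set α} {θ : α → α → Prop}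
    (hc : IsCong Opt θ) {p q : α} (h : θ p q) : bowtie Opt p q := ⟨θ, hc, h⟩

-- product congruence

theorem prod_isCong {α β : Type} {OptC : α → Set α} {OptD : β → Set β}
    {φ : α → α → Prop} {ψ : β → β → Prop}
    (hφ : IsCong OptC φ) (hψ : IsCong OptD ψ) :
    IsCong (sumOpt OptC OptD) (fun x y => φ x.1 y.1 ∧ ψ x.2 y.2) := by
  have hequiv : Equivalence (fun x y : α × β => φ x.1 y.1 ∧ ψ x.2 y.2) :=
    ⟨fun a => ⟨hφ.1.refl _, hψ.1.refl _⟩,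
     fun ⟨h1, h2⟩ => ⟨hφ.1.symm h1, hψ.1.symm h2⟩,
     fun ⟨h1, h2⟩ ⟨h3, h4⟩ => ⟨hφ.1.trans h1 h3, hψ.1.trans h2 h4⟩⟩
  refine ⟨hequiv, fun p q ⟨h1, h2⟩ => (clsSet_eq_iff hequiv).2 ?_⟩
  have rC := cong_relSet hφ h1
  have rD := cong_relSet hψ h2
  constructor
  · rintro x (⟨c, hc, rfl⟩ | ⟨d, hd, rfl⟩)
    · obtain ⟨c', hc', hcc⟩ := rC.1 c hc
      exact ⟨(c', q.2), Or.inl ⟨c', hc', rfl⟩, ⟨hcc, h2⟩⟩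
    · obtain ⟨d', hd', hdd⟩ := rD.1 d hd
      exact ⟨(q.1, d'), Or.inr ⟨d', hd', rfl⟩, ⟨h1, hdd⟩⟩
  · rintro y (⟨c', hc', rfl⟩ | ⟨d', hd', rfl⟩)
    · obtain ⟨c, hc, hcc⟩ := rC.2 c' hc'
      exact ⟨(c, p.2), Or.inl ⟨c, hc, rfl⟩, ⟨hcc, h2⟩⟩
    · obtain ⟨d, hd, hdd⟩ := rD.2 d' hd'
      exact ⟨(p.1, d), Or.inr ⟨d, hd, rfl⟩, ⟨h1, hdd⟩⟩

-- OptPres lemmas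

theorem optPres_symm {α β : Type} {O₁ : α → Set α} {O₂ : β → Set β} (e : α ≃ β)
    (h : OptPres O₁ O₂ e) : OptPres O₂ O₁ e.symm := by
  intro q
  have := h (e.symm q)
  rw [e.apply_symm_apply] at this
  rw [this, ← Set.image_comp]
  simp

theorem optPres_comp {α β γ : Type} {O₁ : α → Set α} {O₂ : β → Set β} {O₃ : γ → Set γ}
    {f : α → β} {g : β → γ} (hf : OptPres O₁ O₂ f) (hg : OptPres O₂ O₃ g) :
    OptPres O₁ O₃ (g ∘ f) := by
  intro p
  show O₃ (g (f p)) = _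
  rw [hg (f p), hf p, Set.image_image]
  rfl

-- pullback of congruences along OptPres maps

theorem cong_pullback {α β : Type} {O₁ : α → Set α} {O₂ : β → Set β} (f : α → β)
    (hf : OptPres O₁ O₂ f) {σ : β → β → Prop} (hσ : IsCong O₂ σ) :
    IsCong O₁ (fun a b => σ (f a) (f b)) := by
  have hequiv : Equivalence (fun a b : α => σ (f a) (f b)) :=
    ⟨fun a => hσ.1.refl _, fun h => hσ.1.symm h, fun h1 h2 => hσ.1.trans h1 h2⟩
  refine ⟨hequiv, fun p q hpq => (clsSet_eq_iff hequiv).2 ?_⟩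
  have r := cong_relSet hσ hpq
  rw [hf p, hf q] at r
  constructor
  · intro x hx
    obtain ⟨y', hy', hxy⟩ := r.1 (f x) ⟨x, hx, rfl⟩
    obtain ⟨y, hy, rfl⟩ := hy'
    exact ⟨y, hy, hxy⟩
  · intro y hy
    obtain ⟨x', hx', hxy⟩ := r.2 (f y) ⟨y, hy, rfl⟩
    obtain ⟨x, hx, rfl⟩ := hx'
    exact ⟨x, hx, hxy⟩

theorem optPres_mk {α : Type} {Opt : α → Set α} {θ : α → α → Prop} (hθ : IsCong Opt θ) :
    OptPres Opt (quotOpt Opt θ) (Quot.mk θ) := fun p => quotOpt_mk hθ p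

theorem bowtie_transport {α β : Type} {O₁ : α → Set α} {O₂ : β → Set β} (e : α ≃ β)
    (he : OptPres O₁ O₂ e) (a b : α) : bowtie O₁ a b ↔ bowtie O₂ (e a) (e b) := by
  constructor
  · rintro ⟨θ, hθ, hab⟩
    refine ⟨fun x y => θ (e.symm x) (e.symm y),
      cong_pullback e.symm (optPres_symm e he) hθ, ?_⟩
    simpa using hab
  · rintro ⟨σ, hσ, hab⟩
    exact ⟨fun x y => σ (e x) (e y), cong_pullback e he hσ, hab⟩

theorem transfer_quot {α β : Type} {O₁ : α → Set α} {O₂ : β → Set β} (e : α ≃ β)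
    (he : OptPres O₁ O₂ e) :
    ∃ e' : Quot (bowtie O₁) ≃ Quot (bowtie O₂),
      OptPres (quotOpt O₁ (bowtie O₁)) (quotOpt O₂ (bowtie O₂)) e' := by
  refine ⟨⟨Quot.lift (fun a => Quot.mk _ (e a))
      (fun a b h => Quot.sound ((bowtie_transport e he a b).1 h)),
    Quot.lift (fun b => Quot.mk _ (e.symm b))
      (fun a b h => Quot.sound ((bowtie_transport e he (e.symm a) (e.symm b)).2
        (by simpa using h))), ?_, ?_⟩, ?_⟩
  · intro x
    induction x using Quot.ind with
    | _ a => simp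
  · intro y
    induction y using Quot.ind with
    | _ b => simp
  · intro p
    induction p using Quot.ind with
    | _ a =>
      show quotOpt O₂ (bowtie O₂) (Quot.mk _ (e a)) = _
      rw [quotOpt_mk (bowtie_isCong O₂), quotOpt_mk (bowtie_isCong O₁), he a,
        Set.image_image, Set.image_image]
      rfl

-- step C : quotient by a congruence, then by bowtie

theorem quot_quot {α : Type} (Opt : α → Set α) {θ : α → α → Prop} (hθ : IsCong Opt θ) :
    ∃ e : Quot (bowtie Opt) ≃ Quot (bowtie (quotOpt Opt θ)),
      OptPres (quotOpt Opt (bowtie Opt))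
        (quotOpt (quotOpt Opt θ) (bowtie (quotOpt Opt θ))) e := by
  have hb := bowtie_isCong Opt
  have hle : ∀ a b, θ a b → bowtie Opt a b := fun a b h => bowtie_le hθ h
  set Obar := quotOpt Opt θ with hO
  -- the pushforward relation
  set ρ : Quot θ → Quot θ → Prop := fun x y => bowtie Opt x.out y.out with hρ
  have hbridge : ∀ p q : α, ρ (Quot.mk θ p) (Quot.mk θ q) ↔ bowtie Opt p q := by
    intro p q
    have h1 : bowtie Opt (Quot.mk θ p).out p := hle _ _ (rel_out hθ.1 p)
    have h2 : bowtie Opt (Quot.mk θ q).out q := hle _ _ (rel_out hθ.1 q)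
    exact ⟨fun h => hb.1.trans (hb.1.trans (hb.1.symm h1) h) h2,
           fun h => hb.1.trans (hb.1.trans h1 h) (hb.1.symm h2)⟩
  have hρe : Equivalence ρ :=
    ⟨fun x => hb.1.refl _, fun h => hb.1.symm h, fun h1 h2 => hb.1.trans h1 h2⟩
  have hρcong : IsCong Obar ρ := by
    refine ⟨hρe, fun x y hxy => ?_⟩
    obtain ⟨p, rfl⟩ := Quot.exists_rep x
    obtain ⟨q, rfl⟩ := Quot.exists_rep y
    have hpq : bowtie Opt p q := (hbridge p q).1 hxy
    have r := cong_relSet hb hpq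
    rw [hO, quotOpt_mk hθ, quotOpt_mk hθ]
    apply (clsSet_eq_iff hρe).2
    constructor
    · rintro _ ⟨c, hc, rfl⟩
      obtain ⟨d, hd, hcd⟩ := r.1 c hc
      exact ⟨Quot.mk θ d, ⟨d, hd, rfl⟩, (hbridge c d).2 hcd⟩
    · rintro _ ⟨d, hd, rfl⟩
      obtain ⟨c, hc, hcd⟩ := r.2 d hd
      exact ⟨Quot.mk θ c, ⟨c, hc, rfl⟩, (hbridge c d).2 hcd⟩
  have hC1 : ∀ p q : α, bowtie Opt p q → bowtie Obar (Quot.mk θ p) (Quot.mk θ q) :=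
    fun p q h => ⟨ρ, hρcong, (hbridge p q).2 h⟩
  have hC2 : ∀ p q : α, bowtie Obar (Quot.mk θ p) (Quot.mk θ q) → bowtie Opt p q := by
    rintro p q ⟨σ, hσ, h⟩
    exact ⟨fun a b => σ (Quot.mk θ a) (Quot.mk θ b),
      cong_pullback (Quot.mk θ) (optPres_mk hθ) hσ, h⟩
  refine ⟨⟨Quot.lift (fun a => Quot.mk (bowtie Obar) (Quot.mk θ a))
      (fun a b h => Quot.sound (hC1 a b h)),
    Quot.lift (Quot.lift (fun a => Quot.mk (bowtie Opt) a)
        (fun a b h => Quot.sound (hle a b h)))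
      (fun x y hxy => ?_), ?_, ?_⟩, ?_⟩
  · obtain ⟨p, rfl⟩ := Quot.exists_rep x
    obtain ⟨q, rfl⟩ := Quot.exists_rep y
    exact Quot.sound (hC2 p q hxy)
  · intro x
    induction x using Quot.ind with
    | _ a => rfl
  · intro y
    induction y using Quot.ind with
    | _ x =>
      induction x using Quot.ind with
      | _ a => rfl
  · intro p
    induction p using Quot.ind with
    | _ a =>
      show quotOpt Obar (bowtie Obar) (Quot.mk _ (Quot.mk θ a)) = _
      rw [quotOpt_mk (bowtie_isCong Obar), quotOpt_mk hb,
        show Obar (Quot.mk θ a) = Quot.mk θ '' Opt a from quotOpt_mk hθ a,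
        Set.image_image, Set.image_image]
      rfl

theorem sum_quot_equiv {α β : Type} {OptC : α → Set α} {OptD : β → Set β}
    {φ : α → α → Prop} {ψ : β → β → Prop}
    (hφ : IsCong OptC φ) (hψ : IsCong OptD ψ) :
    ∃ e : Quot (fun x y : α × β => φ x.1 y.1 ∧ ψ x.2 y.2) ≃ Quot φ × Quot ψ,
      OptPres (quotOpt (sumOpt OptC OptD) (fun x y => φ x.1 y.1 ∧ ψ x.2 y.2))
        (sumOpt (quotOpt OptC φ) (quotOpt OptD ψ)) e := by
  have hθ := prod_isCong hφ hψ
  refine ⟨⟨Quot.lift (fun x : α × β => (Quot.mk φ x.1, Quot.mk ψ x.2))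
      (fun a b ⟨h1, h2⟩ => by show (Quot.mk φ a.1, Quot.mk ψ a.2) = (Quot.mk φ b.1, Quot.mk ψ b.2); rw [Quot.sound h1, Quot.sound h2]),
    fun cd => Quot.mk _ (cd.1.out, cd.2.out), ?_, ?_⟩, ?_⟩
  · intro x
    induction x using Quot.ind with
    | _ a => exact Quot.sound ⟨rel_out hφ.1 a.1, rel_out hψ.1 a.2⟩
  · rintro ⟨c, d⟩
    show (Quot.mk φ c.out, Quot.mk ψ d.out) = (c, d)
    rw [Quot.out_eq, Quot.out_eq]
  · intro p
    induction p using Quot.ind with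
    | _ a =>
      show sumOpt (quotOpt OptC φ) (quotOpt OptD ψ) (Quot.mk φ a.1, Quot.mk ψ a.2) = _
      rw [quotOpt_mk hθ]
      show (fun c => (c, Quot.mk ψ a.2)) '' quotOpt OptC φ (Quot.mk φ a.1) ∪
          (fun d => (Quot.mk φ a.1, d)) '' quotOpt OptD ψ (Quot.mk ψ a.2) = _
      rw [quotOpt_mk hφ, quotOpt_mk hψ]
      rw [show sumOpt OptC OptD a
          = (fun c => (c, a.2)) '' OptC a.1 ∪ (fun d => (a.1, d)) '' OptD a.2 from rfl,
        Set.image_union, Set.image_union]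
      simp only [Set.image_image]
      rfl

theorem stmt19 {α β : Type} [Nonempty α] [Nonempty β]
    (OptC : α → Set α) (OptD : β → Set β)
    (φ : α → α → Prop) (ψ : β → β → Prop)
    (hφ : IsCong OptC φ) (hψ : IsCong OptD ψ) :
    (IsCong (sumOpt OptC OptD) (fun x y => φ x.1 y.1 ∧ ψ x.2 y.2) ∧
      ∃ e : Quot (fun x y : α × β => φ x.1 y.1 ∧ ψ x.2 y.2) ≃ Quot φ × Quot ψ,
        OptPres (quotOpt (sumOpt OptC OptD) (fun x y => φ x.1 y.1 ∧ ψ x.2 y.2))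
          (sumOpt (quotOpt OptC φ) (quotOpt OptD ψ)) e ∧
        OptPres (sumOpt (quotOpt OptC φ) (quotOpt OptD ψ))
          (quotOpt (sumOpt OptC OptD) (fun x y => φ x.1 y.1 ∧ ψ x.2 y.2)) e.symm) ∧
    (∀ (γ δ : Type) (O₁ : γ → Set γ) (O₂ : δ → Set δ),
      ∃ e : Quot (bowtie (sumOpt O₁ O₂)) ≃
            Quot (bowtie (sumOpt (quotOpt O₁ (bowtie O₁)) (quotOpt O₂ (bowtie O₂)))),
        OptPres (quotOpt (sumOpt O₁ O₂) (bowtie (sumOpt O₁ O₂)))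
          (quotOpt (sumOpt (quotOpt O₁ (bowtie O₁)) (quotOpt O₂ (bowtie O₂)))
            (bowtie (sumOpt (quotOpt O₁ (bowtie O₁)) (quotOpt O₂ (bowtie O₂))))) e ∧
        OptPres (quotOpt (sumOpt (quotOpt O₁ (bowtie O₁)) (quotOpt O₂ (bowtie O₂)))
            (bowtie (sumOpt (quotOpt O₁ (bowtie O₁)) (quotOpt O₂ (bowtie O₂)))))
          (quotOpt (sumOpt O₁ O₂) (bowtie (sumOpt O₁ O₂))) e.symm) := by
  constructor
  · refine ⟨prod_isCong hφ hψ, ?_⟩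
    obtain ⟨e, he⟩ := sum_quot_equiv hφ hψ
    exact ⟨e, he, optPres_symm e he⟩
  · intro γ δ O₁ O₂
    obtain ⟨e₁, he₁⟩ := sum_quot_equiv (bowtie_isCong O₁) (bowtie_isCong O₂)
    obtain ⟨e₂, he₂⟩ := quot_quot (sumOpt O₁ O₂)
      (prod_isCong (bowtie_isCong O₁) (bowtie_isCong O₂))
    obtain ⟨e₃, he₃⟩ := transfer_quot e₁ he₁
    have hc : OptPres (quotOpt (sumOpt O₁ O₂) (bowtie (sumOpt O₁ O₂)))
        (quotOpt (sumOpt (quotOpt O₁ (bowtie O₁)) (quotOpt O₂ (bowtie O₂)))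
          (bowtie (sumOpt (quotOpt O₁ (bowtie O₁)) (quotOpt O₂ (bowtie O₂)))))
        (e₂.trans e₃) := fun p => optPres_comp he₂ he₃ p
    exact ⟨e₂.trans e₃, hc, optPres_symm _ hc⟩
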